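/- There exists a sequence of measurable functions b_n : ℝ → ℝ (n ≥ 2) such that (i) for every Schwartz function ψ : ℝ → ℂ, ∫_ℝ b_n(x) ψ(x) dx → 0 as n → ∞, yet (ii) there exists a nonnegative Schwartz function ψ₀ : ℝ → ℝ such that ∫_ℝ b_n(x) e^{x²} ψ₀(x) dx → +∞ as n → ∞. Consequently multiplication by the Gaussian inverse e^{x²} is not continuous on tempered distributions: b_n → 0 in the weak topology of tempered distributions but b_n · e^{x²} does not converge, so deconvolution with a Gaussian density is ill-posed. -/

import Mathlib

/-!
Take `b n` the indicator of `[n, n + 1]`. Against a Schwartz function `ψ` it integrates to the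
average of `ψ` over `[n, n + 1]`, which tends to `0` because `ψ` vanishes at infinity. Against
`e^{x²} ψ₀` with the Schwartz function `ψ₀ = e^{-x²/2}` it integrates `e^{x²/2}` over `[n, n + 1]`,
which tends to infinity. That `e^{-x²/2}` is Schwartz follows from its derivatives being Hermite
polynomials times `e^{-x²/2}`.
-/

open MeasureTheory Filter Real Set Polynomial Topology

theorem Continuous.exists_forall_norm_le_of_tendsto_cocompact {X E : Type*} [TopologicalSpace X]
    [SeminormedAddCommGroup E] {f : X → E} (hf : Continuous f)
    (h : Tendsto f (cocompact X) (𝓝 0)) : ∃ C, ∀ x, ‖f x‖ ≤ C := by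
  simpa using isBounded_iff_forall_norm_le.1
    (ZeroAtInftyContinuousMap.isBounded_range ⟨⟨f, hf⟩, h⟩)

theorem Polynomial.tendsto_eval_mul_exp_neg_mul_sq_cocompact {a : ℝ} (ha : 0 < a) (P : ℝ[X]) :
    Tendsto (fun x => P.eval x * exp (-a * x ^ 2)) (cocompact ℝ) (𝓝 0) := by
  induction P using Polynomial.induction_on' with
  | add P Q hP hQ => simpa [add_mul] using hP.add hQ
  | monomial i c =>
    have := (tendsto_rpow_abs_mul_exp_neg_mul_sq_cocompact ha i).const_mul c
    rw [mul_zero] at this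
    refine tendsto_zero_iff_norm_tendsto_zero.2 ?_
    refine (tendsto_zero_iff_norm_tendsto_zero.1 this).congr fun x => ?_
    simp [Real.rpow_natCast, mul_assoc, abs_of_pos (exp_pos _)]

theorem iteratedDeriv_exp_neg_sq_div_two (n : ℕ) :
    iteratedDeriv n (fun x : ℝ => exp (-(x ^ 2 / 2))) =
      fun x => (-1) ^ n * ((hermite n).map (algebraMap ℤ ℝ)).eval x * exp (-(1 / 2) * x ^ 2) := by
  ext x
  rw [iteratedDeriv_eq_iterate, deriv_gaussian_eq_hermite_mul_gaussian, aeval_def,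
    eval₂_eq_eval_map]
  ring_nf

noncomputable def gaussianSchwartz : SchwartzMap ℝ ℝ where
  toFun x := exp (-(x ^ 2 / 2))
  smooth' := by fun_prop
  decay' k n := by
    obtain ⟨C, hC⟩ := Continuous.exists_forall_norm_le_of_tendsto_cocompact (by fun_prop)
      ((X ^ k * (hermite n).map (algebraMap ℤ ℝ)).tendsto_eval_mul_exp_neg_mul_sq_cocompact
        one_half_pos)
    refine ⟨C, fun x => ?_⟩
    rw [norm_iteratedFDeriv_eq_norm_iteratedDeriv, iteratedDeriv_exp_neg_sq_div_two, ← norm_pow,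
      ← norm_mul]
    simpa [mul_assoc] using hC x

theorem gaussianSchwartz_apply (x : ℝ) : gaussianSchwartz x = exp (-(x ^ 2 / 2)) := rfl

theorem tendsto_setIntegral_Icc_nat_zero {E : Type*} [NormedAddCommGroup E] [NormedSpace ℝ E]
    {f : ℝ → E} (hf : Tendsto f atTop (𝓝 0)) :
    Tendsto (fun n : ℕ => ∫ x in Icc (n : ℝ) (n + 1), f x) atTop (𝓝 0) := by
  rw [Metric.tendsto_atTop]
  intro ε hε
  obtain ⟨N, hN⟩ := (Metric.tendsto_atTop.1 hf) (ε / 2) (half_pos hε)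
  obtain ⟨M, hM⟩ := exists_nat_ge N
  refine ⟨M, fun n hn => ?_⟩
  have hbound : ∀ x ∈ Icc (n : ℝ) (n + 1), ‖f x‖ ≤ ε / 2 := fun x hx =>
    by simpa using (hN x (by linarith [hx.1, (Nat.cast_le (α := ℝ)).2 hn])).le
  calc dist (∫ x in Icc (n : ℝ) (n + 1), f x) 0
      ≤ ε / 2 * volume.real (Icc (n : ℝ) (n + 1)) := by
        simpa using norm_setIntegral_le_of_norm_le_const (μ := volume) measure_Icc_lt_top hbound
    _ < ε := by
        simp [Real.volume_real_Icc]
        linarith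

theorem tendsto_setIntegral_Icc_nat_atTop {f : ℝ → ℝ} (hf : Continuous f)
    (hlim : Tendsto f atTop atTop) :
    Tendsto (fun n : ℕ => ∫ x in Icc (n : ℝ) (n + 1), f x) atTop atTop := by
  rw [tendsto_atTop]
  intro c
  obtain ⟨N, hN⟩ := tendsto_atTop_atTop.1 hlim c
  filter_upwards [tendsto_natCast_atTop_atTop.eventually_ge_atTop N] with n hn
  calc c = c * volume.real (Icc (n : ℝ) (n + 1)) := by simp
    _ ≤ ∫ x in Icc (n : ℝ) (n + 1), f x :=
        setIntegral_ge_of_const_le_real measurableSet_Icc (by simp)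
          (fun x hx => hN x (hn.trans hx.1)) hf.integrableOn_Icc

/-- There exists a sequence of measurable functions `b n : ℝ → ℝ` such that
(i) for every Schwartz `ψ : ℝ → ℂ`, `∫ b n x * ψ x dx → 0`, yet (ii) there is a
nonnegative Schwartz function `ψ₀ : ℝ → ℝ` with `∫ b n x * e^{x²} * ψ₀ x dx → +∞`.
Hence multiplication by `e^{x²}` is not weakly continuous on tempered distributions. -/
theorem stmt_3 :
    ∃ b : ℕ → ℝ → ℝ,
      (∀ n : ℕ, Measurable (b n)) ∧
      (∀ ψ : SchwartzMap ℝ ℂ,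
        Tendsto (fun n : ℕ => ∫ x : ℝ, (b n x : ℂ) * ψ x) atTop (nhds 0)) ∧
      (∃ ψ₀ : SchwartzMap ℝ ℝ, (∀ x : ℝ, 0 ≤ ψ₀ x) ∧
        Tendsto (fun n : ℕ => ∫ x : ℝ, b n x * Real.exp (x ^ 2) * ψ₀ x)
          atTop atTop) := by
  refine ⟨fun n => (Icc (n : ℝ) (n + 1)).indicator 1,
    fun n => measurable_one.indicator measurableSet_Icc, fun ψ => ?_,
    gaussianSchwartz, fun x => (exp_pos _).le, ?_⟩
  · refine (tendsto_setIntegral_Icc_nat_zero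
      (ψ.tendsto_cocompact.mono_left atTop_le_cocompact)).congr fun n => ?_
    rw [← integral_indicator measurableSet_Icc]
    congr 1 with x
    by_cases hx : x ∈ Icc (n : ℝ) (n + 1) <;> simp [hx]
  · have hexp : Tendsto (fun x : ℝ => exp (x ^ 2 / 2)) atTop atTop :=
      tendsto_exp_atTop.comp ((tendsto_pow_atTop two_ne_zero).atTop_div_const two_pos)
    refine (tendsto_setIntegral_Icc_nat_atTop (by fun_prop) hexp).congr fun n => ?_
    rw [← integral_indicator measurableSet_Icc]
    congr 1 with x
    by_cases hx : x ∈ Icc (n : ℝ) (n + 1)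
    · simp only [indicator_of_mem hx, gaussianSchwartz_apply, Pi.one_apply, one_mul, ← exp_add]
      ring_nf
    · simp [hx]
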